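/- arXiv:1312.5074 — 2 statements merged into one kernel-verified Lean document; each statement's English description precedes it below -/
import Mathlib

section
/- Let I be a finite set, and let G be a group acting on subsets of I × G by g · B = {(s, gx) : (s,x) ∈ B}. There is an order-preserving bijection between G-labeled set partitions of I (pairs of blocks (B, orbit of f : B → G under left G-translation), ordered by the induced refinement-type order) and partitions of I × G on whose blocks G acts freely, ordered by refinement; the bijection sends the labeled partition X to the partition of I × G with blocks {g · β_{B,f} : g ∈ G, (B, f̃) ∈ X} where β_{B,f} = {(b, f(b)) : b ∈ B}. -/
open Finset
open scoped Classical

/-- A `G`-labeled set partition of the finite set `I`: a partition of `I` into nonempty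
blocks, each block `B` labeled by an orbit of maps `B → G` under pointwise left
translation by `G`. -/
structure GLabeledPartition (I : Type) [Fintype I] [DecidableEq I]
    (G : Type) [Group G] where
  blocks : Finset (Finset I)
  nonempty_blocks : ∀ B ∈ blocks, B.Nonempty
  exists_unique_block : ∀ x : I, ∃! B, B ∈ blocks ∧ x ∈ B
  label : (B : Finset I) → B ∈ blocks → MulAction.orbitRel.Quotient G ({ x // x ∈ B } → G)

/-- Restriction of a `G`-orbit of maps `B → G` to a subset `A ⊆ B`; this is
well defined on orbits. -/
def restrictLabel {I : Type} {G : Type} [Group G] {A B : Finset I} (h : A ⊆ B) :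
    MulAction.orbitRel.Quotient G ({ x // x ∈ B } → G) →
      MulAction.orbitRel.Quotient G ({ x // x ∈ A } → G) :=
  Quotient.map' (fun f a => f ⟨a.1, h a.2⟩) (by
    rintro f g ⟨c, rfl⟩
    exact ⟨c, rfl⟩)

/-- The refinement-type order on `G`-labeled set partitions: each block of `Y` is a
(disjoint) union of blocks of `X`, and the label of each block of `X` is the
restriction of the label of the block of `Y` containing it. -/
def LPle {I : Type} [Fintype I] [DecidableEq I] {G : Type} [Group G]
    (X Y : GLabeledPartition I G) : Prop :=
  (∀ A ∈ X.blocks, ∃ B ∈ Y.blocks, A ⊆ B) ∧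
  ∀ (B : Finset I) (hB : B ∈ Y.blocks) (A : Finset I) (hA : A ∈ X.blocks) (hAB : A ⊆ B),
    X.label A hA = restrictLabel hAB (Y.label B hB)

/-- `Λ` is a partition of the type `α` (as a set of sets). -/
def IsSetPartition {α : Type*} (Λ : Set (Set α)) : Prop :=
  (∀ C ∈ Λ, C.Nonempty) ∧ ∀ p : α, ∃! C, C ∈ Λ ∧ p ∈ C

/-- The partition `Λ` of `I × G` is invariant under the action `g · (s,x) = (s, gx)`,
so that `G` acts on its set of blocks. -/
def GInvariant {I : Type} {G : Type} [Group G] (Λ : Set (Set (I × G))) : Prop :=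
  ∀ g : G, ∀ C ∈ Λ, (fun p : I × G => (p.1, g * p.2)) '' C ∈ Λ

/-- `G` acts freely on the blocks of the partition `Λ` of `I × G`. -/
def ActsFreelyOnBlocks {I : Type} {G : Type} [Group G] (Λ : Set (Set (I × G))) : Prop :=
  ∀ C ∈ Λ, ∀ g : G, (fun p : I × G => (p.1, g * p.2)) '' C = C → g = 1

/-- Refinement order on set partitions of a type. -/
def SetRefines {α : Type*} (Λ Λ' : Set (Set α)) : Prop :=
  ∀ C ∈ Λ, ∃ C' ∈ Λ', C ⊆ C'

/-- The partition of `I × G` associated to a `G`-labeled set partition `X` of `I`: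
its blocks are the sets `g · β_{B,f} = {(b, g·f(b)) : b ∈ B}` for `(B, f̃) ∈ X`
and `g ∈ G`. -/
def toBlocks {I : Type} [Fintype I] [DecidableEq I] {G : Type} [Group G]
    (X : GLabeledPartition I G) : Set (Set (I × G)) :=
  {C | ∃ (B : Finset I) (hB : B ∈ X.blocks) (f : { x // x ∈ B } → G),
      X.label B hB = Quotient.mk'' f ∧
      ∃ g : G, C = Set.range fun b : { x // x ∈ B } => ((b : I), g * f b)}

/-
A labeled block `(B, f̃)` is recorded in `I × G` by the `G`-orbit of graphs
`β_{B,g·f} = {(b, g f(b)) : b ∈ B}`; distinct graphs in the orbit are disjoint, and translation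
acts freely on them. Conversely, in a `G`-invariant partition on whose blocks `G` acts freely,
a block `C` containing `(s, x)` and `(s, y)` is moved to itself by `y x⁻¹`, so `x = y`: every
block is the graph of a function on its projection to `I`, and two blocks with the same
projection are translates of each other, so they define a single labeled block. Under this
dictionary inclusion of graphs is restriction of functions, which matches the two orders.
-/

open MulAction

section OrbitQuotient

variable {G α : Type*} [Group G] [MulAction G α]

theorem orbitRel_mk_eq_mk_iff {a b : α} :
    (Quotient.mk'' a : orbitRel.Quotient G α) = Quotient.mk'' b ↔ ∃ c : G, c • b = a := by
  rw [Quotient.eq'', orbitRel_apply, mem_orbit_iff]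

theorem orbitRel_mk_smul (c : G) (a : α) :
    (Quotient.mk'' (c • a) : orbitRel.Quotient G α) = Quotient.mk'' a :=
  orbitRel_mk_eq_mk_iff.2 ⟨c, rfl⟩

end OrbitQuotient

section GraphSet

variable {I G : Type*}

def graphSet (B : Finset I) (f : B → G) : Set (I × G) :=
  Set.range fun b : B => ((b : I), f b)

theorem mem_graphSet {B : Finset I} {f : B → G} {s : I} {x : G} :
    (s, x) ∈ graphSet B f ↔ ∃ h : s ∈ B, f ⟨s, h⟩ = x := by
  constructor
  · rintro ⟨⟨b, hb⟩, hbx⟩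
    obtain ⟨rfl, rfl⟩ := Prod.mk.inj hbx
    exact ⟨hb, rfl⟩
  · rintro ⟨h, rfl⟩
    exact ⟨⟨s, h⟩, rfl⟩

theorem graphSet_nonempty {B : Finset I} (hB : B.Nonempty) (f : B → G) :
    (graphSet B f).Nonempty :=
  ⟨_, Set.mem_range_self ⟨hB.choose, hB.choose_spec⟩⟩

theorem fst_image_graphSet (B : Finset I) (f : B → G) : Prod.fst '' graphSet B f = B := by
  rw [graphSet, ← Set.range_comp]
  exact Subtype.range_coe

theorem eq_of_graphSet_eq {A B : Finset I} {f : A → G} {F : B → G}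
    (h : graphSet A f = graphSet B F) : A = B := by
  rw [← Finset.coe_inj, ← fst_image_graphSet A f, h, fst_image_graphSet]

theorem graphSet_subset_iff {A B : Finset I} {f : A → G} {F : B → G} :
    graphSet A f ⊆ graphSet B F ↔ ∃ h : A ⊆ B, f = fun a : A => F ⟨a, h a.2⟩ := by
  constructor
  · intro hsub
    have hmem : ∀ a : A, ((a : I), f a) ∈ graphSet B F := fun a => hsub ⟨a, rfl⟩
    refine ⟨fun a ha => (mem_graphSet.1 (hmem ⟨a, ha⟩)).1, funext fun a => ?_⟩
    exact (mem_graphSet.1 (hmem a)).2.symm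
  · rintro ⟨hAB, rfl⟩ _ ⟨a, rfl⟩
    exact ⟨⟨a, hAB a.2⟩, rfl⟩

theorem graphSet_injective (B : Finset I) : Function.Injective (graphSet (G := G) B) := by
  intro f F h
  obtain ⟨_, hfF⟩ := graphSet_subset_iff.1 h.le
  exact hfF

theorem image_graphSet [Group G] (g : G) (B : Finset I) (f : B → G) :
    (fun p : I × G => (p.1, g * p.2)) '' graphSet B f = graphSet B (g • f) := by
  rw [graphSet, ← Set.range_comp]
  rfl

end GraphSet

theorem restrictLabel_mk {I G : Type} [Group G] {A B : Finset I} (hAB : A ⊆ B) (F : B → G) :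
    restrictLabel hAB (Quotient.mk'' F : orbitRel.Quotient G (B → G)) =
      Quotient.mk'' fun a : A => F ⟨a, hAB a.2⟩ :=
  rfl

namespace GLabeledPartition

variable {I : Type} [Fintype I] [DecidableEq I] {G : Type} [Group G]

theorem eq_of_mem_of_mem (X : GLabeledPartition I G) {B B' : Finset I} (hB : B ∈ X.blocks)
    (hB' : B' ∈ X.blocks) {s : I} (hs : s ∈ B) (hs' : s ∈ B') : B = B' :=
  (X.exists_unique_block s).unique ⟨hB, hs⟩ ⟨hB', hs'⟩

@[ext]
theorem ext {X Y : GLabeledPartition I G} (hblocks : X.blocks = Y.blocks)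
    (hlabel : ∀ B (hX : B ∈ X.blocks) (hY : B ∈ Y.blocks), X.label B hX = Y.label B hY) :
    X = Y := by
  obtain ⟨blocks, _, _, labelX⟩ := X
  obtain ⟨_, _, _, labelY⟩ := Y
  subst hblocks
  congr
  funext B hB
  exact hlabel B hB hB

end GLabeledPartition

section ToBlocks

variable {I : Type} [Fintype I] [DecidableEq I] {G : Type} [Group G]

theorem mem_toBlocks {X : GLabeledPartition I G} {C : Set (I × G)} :
    C ∈ toBlocks X ↔
      ∃ (B : Finset I) (hB : B ∈ X.blocks) (f : B → G),
        X.label B hB = Quotient.mk'' f ∧ C = graphSet B f := by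
  constructor
  · rintro ⟨B, hB, f, hf, g, rfl⟩
    exact ⟨B, hB, g • f, by rw [hf, orbitRel_mk_smul], rfl⟩
  · rintro ⟨B, hB, f, hf, rfl⟩
    exact ⟨B, hB, f, hf, 1, by simp only [one_mul]; rfl⟩

theorem graphSet_out_mem_toBlocks (X : GLabeledPartition I G) {B : Finset I}
    (hB : B ∈ X.blocks) : graphSet B (X.label B hB).out ∈ toBlocks X :=
  mem_toBlocks.2 ⟨B, hB, _, (Quotient.out_eq' _).symm, rfl⟩

theorem isSetPartition_toBlocks (X : GLabeledPartition I G) : IsSetPartition (toBlocks X) := by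
  refine ⟨?_, fun ⟨s, x⟩ => ?_⟩
  · intro C hC
    obtain ⟨B, hB, f, -, rfl⟩ := mem_toBlocks.1 hC
    exact graphSet_nonempty (X.nonempty_blocks B hB) f
  obtain ⟨B, ⟨hB, hs⟩, -⟩ := X.exists_unique_block s
  set f := (X.label B hB).out
  -- the graph in the orbit of `f` through `(s, x)`
  set c := x * (f ⟨s, hs⟩)⁻¹
  refine ⟨graphSet B (c • f), ⟨mem_toBlocks.2 ⟨B, hB, c • f, ?_, rfl⟩, ?_⟩, ?_⟩
  · rw [orbitRel_mk_smul, Quotient.out_eq']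
  · exact mem_graphSet.2 ⟨hs, inv_mul_cancel_right x _⟩
  rintro C ⟨hC, hsx⟩
  obtain ⟨B', hB', f', hf', rfl⟩ := mem_toBlocks.1 hC
  obtain ⟨hs', hx⟩ := mem_graphSet.1 hsx
  obtain rfl := X.eq_of_mem_of_mem hB' hB hs' hs
  obtain ⟨d, rfl⟩ := orbitRel_mk_eq_mk_iff.1 (hf'.symm.trans (Quotient.out_eq' _).symm)
  have hdc : d = c := eq_mul_inv_of_mul_eq hx
  rw [hdc]

theorem gInvariant_toBlocks (X : GLabeledPartition I G) : GInvariant (toBlocks X) := by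
  intro g C hC
  obtain ⟨B, hB, f, hf, rfl⟩ := mem_toBlocks.1 hC
  rw [image_graphSet]
  exact mem_toBlocks.2 ⟨B, hB, g • f, by rw [hf, orbitRel_mk_smul], rfl⟩

theorem actsFreelyOnBlocks_toBlocks (X : GLabeledPartition I G) :
    ActsFreelyOnBlocks (toBlocks X) := by
  intro C hC g hgC
  obtain ⟨B, hB, f, -, rfl⟩ := mem_toBlocks.1 hC
  rw [image_graphSet] at hgC
  obtain ⟨s, hs⟩ := X.nonempty_blocks B hB
  exact mul_eq_right.1 (congrFun (graphSet_injective B hgC) ⟨s, hs⟩)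

theorem toBlocks_injective :
    Function.Injective (toBlocks : GLabeledPartition I G → Set (Set (I × G))) := by
  have key : ∀ {X Y : GLabeledPartition I G}, toBlocks X = toBlocks Y →
      ∀ B (hX : B ∈ X.blocks), ∃ hY : B ∈ Y.blocks, X.label B hX = Y.label B hY := by
    intro X Y h B hX
    obtain ⟨B', hY, f', hf', hgraph⟩ :=
      mem_toBlocks.1 (h ▸ graphSet_out_mem_toBlocks X hX)
    obtain rfl := eq_of_graphSet_eq hgraph
    refine ⟨hY, ?_⟩
    rw [hf', ← graphSet_injective B hgraph, Quotient.out_eq']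
  intro X Y h
  refine GLabeledPartition.ext (Finset.ext fun B => ⟨fun hX => (key h B hX).1,
    fun hY => (key h.symm B hY).1⟩) fun B hX hY => ?_
  exact (key h B hX).2

theorem exists_graphSet_supset_of_lple {X Y : GLabeledPartition I G} (hXY : LPle X Y)
    {A : Finset I} (hA : A ∈ X.blocks) {f : A → G} (hf : X.label A hA = Quotient.mk'' f) :
    ∃ C ∈ toBlocks Y, graphSet A f ⊆ C := by
  obtain ⟨B, hB, hAB⟩ := hXY.1 A hA
  obtain ⟨F, hF⟩ := Quotient.exists_rep (Y.label B hB)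
  have hrestrict : (Quotient.mk'' f : orbitRel.Quotient G (A → G)) = Quotient.mk'' fun a : A => F ⟨a, hAB a.2⟩ := by
    rw [← hf, hXY.2 B hB A hA hAB, ← hF]
    rfl
  obtain ⟨c, rfl⟩ := orbitRel_mk_eq_mk_iff.1 hrestrict
  refine ⟨graphSet B (c • F), mem_toBlocks.2 ⟨B, hB, c • F, ?_, rfl⟩, ?_⟩
  · rw [orbitRel_mk_smul, ← hF]
  · exact graphSet_subset_iff.2 ⟨hAB, rfl⟩

theorem lple_of_setRefines {X Y : GLabeledPartition I G}
    (h : SetRefines (toBlocks X) (toBlocks Y)) : LPle X Y := by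
  have key : ∀ A (hA : A ∈ X.blocks), ∃ B, ∃ hB : B ∈ Y.blocks, ∃ hAB : A ⊆ B,
      X.label A hA = restrictLabel hAB (Y.label B hB) := by
    intro A hA
    obtain ⟨C, hC, hsub⟩ := h _ (graphSet_out_mem_toBlocks X hA)
    obtain ⟨B, hB, F, hF, rfl⟩ := mem_toBlocks.1 hC
    obtain ⟨hAB, hf⟩ := graphSet_subset_iff.1 hsub
    refine ⟨B, hB, hAB, ?_⟩
    rw [hF, restrictLabel_mk, ← hf, Quotient.out_eq']
  refine ⟨fun A hA => ?_, fun B hB A hA hAB => ?_⟩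
  · obtain ⟨B, hB, hAB, -⟩ := key A hA
    exact ⟨B, hB, hAB⟩
  · obtain ⟨B', hB', hAB', hlabel⟩ := key A hA
    obtain ⟨a, ha⟩ := X.nonempty_blocks A hA
    obtain rfl := Y.eq_of_mem_of_mem hB' hB (hAB' ha) (hAB ha)
    exact hlabel

theorem lple_iff_setRefines (X Y : GLabeledPartition I G) :
    LPle X Y ↔ SetRefines (toBlocks X) (toBlocks Y) := by
  refine ⟨fun hXY C hC => ?_, lple_of_setRefines⟩
  obtain ⟨A, hA, f, hf, rfl⟩ := mem_toBlocks.1 hC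
  exact exists_graphSet_supset_of_lple hXY hA hf

end ToBlocks

theorem IsSetPartition.eq_of_mem_of_mem {α : Type*} {Λ : Set (Set α)} (hΛ : IsSetPartition Λ)
    {C C' : Set α} (hC : C ∈ Λ) (hC' : C' ∈ Λ) {p : α} (hp : p ∈ C) (hp' : p ∈ C') : C = C' :=
  (hΛ.2 p).unique ⟨hC, hp⟩ ⟨hC', hp'⟩

section FreePartition

variable {I G : Type} [Group G] {Λ : Set (Set (I × G))}

theorem GInvariant.eq_image_of_mem (hΛ : IsSetPartition Λ) (hinv : GInvariant Λ)
    {C C' : Set (I × G)} (hC : C ∈ Λ) (hC' : C' ∈ Λ) {s : I} {x y : G} (hx : (s, x) ∈ C)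
    (hy : (s, y) ∈ C') : C' = (fun p : I × G => (p.1, y * x⁻¹ * p.2)) '' C :=
  hΛ.eq_of_mem_of_mem hC' (hinv _ C hC) hy ⟨(s, x), hx, by simp only [inv_mul_cancel_right]⟩

theorem ActsFreelyOnBlocks.snd_eq (hΛ : IsSetPartition Λ) (hinv : GInvariant Λ)
    (hfree : ActsFreelyOnBlocks Λ) {C : Set (I × G)} (hC : C ∈ Λ) {s : I} {x y : G}
    (hx : (s, x) ∈ C) (hy : (s, y) ∈ C) : x = y :=
  (mul_inv_eq_one.1 (hfree C hC _ (hinv.eq_image_of_mem hΛ hC hC hx hy).symm)).symm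

theorem exists_eq_graphSet [Finite I] (hΛ : IsSetPartition Λ) (hinv : GInvariant Λ)
    (hfree : ActsFreelyOnBlocks Λ) {C : Set (I × G)} (hC : C ∈ Λ) :
    ∃ (B : Finset I) (f : B → G), C = graphSet B f := by
  set B := (Set.toFinite (Prod.fst '' C)).toFinset
  have hB : ∀ s, s ∈ B ↔ ∃ x, (s, x) ∈ C := by simp [B]
  choose f hf using fun b : B => (hB b).1 b.2
  refine ⟨B, f, Set.ext fun ⟨s, x⟩ => ⟨fun hsx => ?_, fun hsx => ?_⟩⟩
  · have hs : s ∈ B := (hB s).2 ⟨x, hsx⟩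
    exact mem_graphSet.2 ⟨hs, hfree.snd_eq hΛ hinv hC (hf ⟨s, hs⟩) hsx⟩
  · obtain ⟨hs, rfl⟩ := mem_graphSet.1 hsx
    exact hf ⟨s, hs⟩

theorem mk_eq_of_graphSet_mem (hΛ : IsSetPartition Λ) (hinv : GInvariant Λ) {B : Finset I}
    {f f' : B → G} (hf : graphSet B f ∈ Λ) (hf' : graphSet B f' ∈ Λ) :
    (Quotient.mk'' f : orbitRel.Quotient G (B → G)) = Quotient.mk'' f' := by
  obtain ⟨_, ⟨b, rfl⟩⟩ := hΛ.1 _ hf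
  have htranslate := hinv.eq_image_of_mem hΛ hf' hf (⟨b, rfl⟩ : _ ∈ graphSet B f') ⟨b, rfl⟩
  rw [image_graphSet] at htranslate
  rw [graphSet_injective B htranslate, orbitRel_mk_smul]

end FreePartition

section OfFreePartition

variable {I : Type} [Fintype I] [DecidableEq I] {G : Type} [Group G]

/-- Any choice of label works: the `f` with `graphSet B f ∈ Λ` form a single orbit
(`mk_eq_of_graphSet_mem`). -/
noncomputable def GLabeledPartition.ofFreePartition (Λ : Set (Set (I × G)))
    (hΛ : IsSetPartition Λ) (hinv : GInvariant Λ) (hfree : ActsFreelyOnBlocks Λ) :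
    GLabeledPartition I G where
  blocks := Finset.univ.filter fun B => ∃ f : B → G, graphSet B f ∈ Λ
  nonempty_blocks B hB := by
    obtain ⟨f, hf⟩ := (Finset.mem_filter.1 hB).2
    obtain ⟨_, ⟨b, rfl⟩⟩ := hΛ.1 _ hf
    exact ⟨b, b.2⟩
  exists_unique_block s := by
    obtain ⟨C, ⟨hC, hs⟩, -⟩ := hΛ.2 (s, 1)
    obtain ⟨B, f, rfl⟩ := exists_eq_graphSet hΛ hinv hfree hC
    refine ⟨B, ⟨Finset.mem_filter.2 ⟨Finset.mem_univ B, f, hC⟩, (mem_graphSet.1 hs).1⟩, ?_⟩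
    rintro B' ⟨hB', hs'⟩
    obtain ⟨f', hf'⟩ := (Finset.mem_filter.1 hB').2
    have htranslate := hinv.eq_image_of_mem hΛ hC hf' hs (⟨⟨s, hs'⟩, rfl⟩ : _ ∈ graphSet B' f')
    rw [image_graphSet] at htranslate
    exact eq_of_graphSet_eq htranslate
  label B hB := Quotient.mk'' (Finset.mem_filter.1 hB).2.choose

theorem toBlocks_ofFreePartition (Λ : Set (Set (I × G))) (hΛ : IsSetPartition Λ)
    (hinv : GInvariant Λ) (hfree : ActsFreelyOnBlocks Λ) :
    toBlocks (GLabeledPartition.ofFreePartition Λ hΛ hinv hfree) = Λ := by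
  ext C
  rw [mem_toBlocks]
  constructor
  · rintro ⟨B, hB, f, hf, rfl⟩
    have hchosen := (Finset.mem_filter.1 hB).2.choose_spec
    obtain ⟨c, rfl⟩ := orbitRel_mk_eq_mk_iff.1 hf.symm
    rw [← image_graphSet]
    exact hinv c _ hchosen
  · intro hC
    obtain ⟨B, f, rfl⟩ := exists_eq_graphSet hΛ hinv hfree hC
    have hB : B ∈ (GLabeledPartition.ofFreePartition Λ hΛ hinv hfree).blocks :=
      Finset.mem_filter.2 ⟨Finset.mem_univ B, f, hC⟩
    exact ⟨B, hB, f, mk_eq_of_graphSet_mem hΛ hinv (Finset.mem_filter.1 hB).2.choose_spec hC, rfl⟩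

end OfFreePartition

/-- There is an order-preserving bijection between the `G`-labeled set partitions of a
finite set `I` and the partitions of `I × G` on whose blocks `G` acts freely (ordered
by refinement), sending `X` to the partition with blocks `{g · β_{B,f}}`. -/
theorem stmt11 (I : Type) [Fintype I] [DecidableEq I] (G : Type) [Group G] :
    ∃ e : GLabeledPartition I G ≃
        {Λ : Set (Set (I × G)) //
          IsSetPartition Λ ∧ GInvariant Λ ∧ ActsFreelyOnBlocks Λ},
      (∀ X Y : GLabeledPartition I G, LPle X Y ↔ SetRefines (e X).1 (e Y).1) ∧
      ∀ X : GLabeledPartition I G, (e X).1 = toBlocks X := by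
  let e (X : GLabeledPartition I G) :
      {Λ : Set (Set (I × G)) // IsSetPartition Λ ∧ GInvariant Λ ∧ ActsFreelyOnBlocks Λ} :=
    ⟨toBlocks X, isSetPartition_toBlocks X, gInvariant_toBlocks X, actsFreelyOnBlocks_toBlocks X⟩
  have he : Function.Bijective e := by
    refine ⟨fun X Y h => toBlocks_injective (congrArg Subtype.val h), ?_⟩
    rintro ⟨Λ, hΛ, hinv, hfree⟩
    exact ⟨_, Subtype.ext (toBlocks_ofFreePartition Λ hΛ hinv hfree)⟩
  exact ⟨Equiv.ofBijective e he, lple_iff_setRefines, fun X => rfl⟩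
end

section
/- The number of G-labeled set partitions of [n] with blocks labeled by G-orbits of maps to a finite group G equals the number of partitions of [n] whose arcs are labeled by elements of G; in particular, for a partition with k blocks there are |G|^(n-k) arc labelings. -/
/-!
Normalizing a representative of an orbit `G • f`, `f : B → G`, to take the value `1` at a fixed
point of `B` shows that there are `|G| ^ (|B| - 1)` labels of a block `B`. On the other
side, every element of a block other than its least one is the right end of exactly one arc,
so a block `B` carries `|B| - 1` arcs. Summing over the blocks, both a `G`-labeling of a
partition `Λ` of `[n]` and an arc-labeling of `Λ` come in `|G| ^ (n - |Λ|)` ways.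
-/

open Finset
open scoped Classical

/-- `Λ` is a set partition of the finite set `S`. -/
def IsPartitionOn {I : Type*} [DecidableEq I] (S : Finset I) (Λ : Finset (Finset I)) : Prop :=
  (∀ B ∈ Λ, B.Nonempty) ∧ (∀ B ∈ Λ, B ⊆ S) ∧ ∀ x ∈ S, ∃! B, B ∈ Λ ∧ x ∈ B

/-- `(i,j)` is an arc of the set partition `Λ` of `[n]`: `i < j`, both lie in a common
block `B`, and no element of `B` lies strictly between them. -/
def IsArc {n : ℕ} (Λ : Finset (Finset (Fin n))) (a : Fin n × Fin n) : Prop :=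
  a.1 < a.2 ∧ ∃ B ∈ Λ, a.1 ∈ B ∧ a.2 ∈ B ∧ ∀ k ∈ B, k ≤ a.1 ∨ a.2 ≤ k

namespace IsPartitionOn

variable {I : Type*} [DecidableEq I] {S : Finset I} {Λ : Finset (Finset I)}

theorem pairwiseDisjoint (hΛ : IsPartitionOn S Λ) : (Λ : Set (Finset I)).PairwiseDisjoint id :=
  fun B hB _ hB' hne => disjoint_left.2 fun _ hx hx' =>
    hne ((hΛ.2.2 _ (hΛ.2.1 B hB hx)).unique ⟨hB, hx⟩ ⟨hB', hx'⟩)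

theorem biUnion_eq (hΛ : IsPartitionOn S Λ) : Λ.biUnion id = S := by
  ext x
  refine ⟨fun hx => ?_, fun hx => ?_⟩
  · obtain ⟨B, hB, hxB⟩ := mem_biUnion.1 hx
    exact hΛ.2.1 B hB hxB
  · obtain ⟨B, ⟨hB, hxB⟩, -⟩ := hΛ.2.2 x hx
    exact mem_biUnion.2 ⟨B, hB, hxB⟩

theorem sum_card (hΛ : IsPartitionOn S Λ) : ∑ B ∈ Λ, B.card = S.card := by
  rw [← hΛ.biUnion_eq, card_biUnion hΛ.pairwiseDisjoint]
  rfl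

theorem sum_card_sub_one (hΛ : IsPartitionOn S Λ) :
    ∑ B ∈ Λ, (B.card - 1) = S.card - Λ.card := by
  have hpos : ∀ B ∈ Λ, 1 ≤ B.card := fun B hB => card_pos.2 (hΛ.1 B hB)
  have hsum : ∑ B ∈ Λ, (B.card - 1) + Λ.card = S.card := by
    rw [← hΛ.sum_card, card_eq_sum_ones, ← sum_add_distrib]
    exact sum_congr rfl fun B hB => Nat.sub_add_cancel (hpos B hB)
  omega

end IsPartitionOn

section Arcs

variable {α : Type*} [LinearOrder α]

def blockArcs (B : Finset α) : Finset (α × α) :=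
  (B ×ˢ B).filter fun a => a.1 < a.2 ∧ ∀ k ∈ B, k ≤ a.1 ∨ a.2 ≤ k

theorem card_blockArcs {B : Finset α} (hB : B.Nonempty) :
    (blockArcs B).card = B.card - 1 := by
  rw [← card_erase_of_mem (min'_mem B hB)]
  refine card_bij (fun a _ => a.2) ?_ ?_ ?_
  · intro a ha
    simp only [blockArcs, mem_filter, mem_product] at ha
    exact mem_erase.2 ⟨(lt_of_le_of_lt (min'_le B a.1 ha.1.1) ha.2.1).ne', ha.1.2⟩
  · intro a ha b hb hab
    simp only [blockArcs, mem_filter, mem_product] at ha hb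
    have hle : b.1 ≤ a.1 := (ha.2.2 b.1 hb.1.1).resolve_right (hab ▸ hb.2.1).not_ge
    have hge : a.1 ≤ b.1 := (hb.2.2 a.1 ha.1.1).resolve_right (hab ▸ ha.2.1).not_ge
    exact Prod.ext (le_antisymm hge hle) hab
  · intro j hj
    obtain ⟨hjmin, hjB⟩ := mem_erase.1 hj
    have hpred : (B.filter (· < j)).Nonempty :=
      ⟨B.min' hB, mem_filter.2 ⟨min'_mem B hB, lt_of_le_of_ne (min'_le B j hjB) hjmin.symm⟩⟩
    obtain ⟨hiB, hij⟩ := mem_filter.1 (max'_mem _ hpred)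
    refine ⟨((B.filter (· < j)).max' hpred, j), ?_, rfl⟩
    simp only [blockArcs, mem_filter, mem_product]
    refine ⟨⟨hiB, hjB⟩, hij, fun k hk => ?_⟩
    rcases lt_or_ge k j with hkj | hjk
    · exact Or.inl (le_max' _ k (mem_filter.2 ⟨hk, hkj⟩))
    · exact Or.inr hjk

theorem blockArcs_subset (B : Finset α) : blockArcs B ⊆ B ×ˢ B :=
  filter_subset _ _

end Arcs

theorem isArc_iff_mem_biUnion {n : ℕ} (Λ : Finset (Finset (Fin n))) (a : Fin n × Fin n) :
    IsArc Λ a ↔ a ∈ Λ.biUnion blockArcs := by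
  simp only [IsArc, blockArcs, mem_biUnion, mem_filter, mem_product]
  constructor
  · rintro ⟨hlt, B, hB, h1, h2, hB'⟩
    exact ⟨B, hB, ⟨h1, h2⟩, hlt, hB'⟩
  · rintro ⟨B, hB, ⟨h1, h2⟩, hlt, hB'⟩
    exact ⟨hlt, B, hB, h1, h2, hB'⟩

theorem card_arcs {n : ℕ} {Λ : Finset (Finset (Fin n))} (hΛ : IsPartitionOn univ Λ) :
    Nat.card {a : Fin n × Fin n // IsArc Λ a} = n - Λ.card := by
  have hdisj : (Λ : Set (Finset (Fin n))).PairwiseDisjoint blockArcs := fun B hB B' hB' hne =>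
    (disjoint_product.2 (Or.inl (hΛ.pairwiseDisjoint hB hB' hne))).mono
      (blockArcs_subset B) (blockArcs_subset B')
  calc Nat.card {a : Fin n × Fin n // IsArc Λ a}
      = (Λ.biUnion blockArcs).card := by
        rw [← Nat.card_eq_finsetCard]
        exact Nat.card_congr (Equiv.subtypeEquivRight (isArc_iff_mem_biUnion Λ))
    _ = ∑ B ∈ Λ, (B.card - 1) := by
        rw [card_biUnion hdisj]
        exact sum_congr rfl fun B hB => card_blockArcs (hΛ.1 B hB)
    _ = n - Λ.card := by rw [hΛ.sum_card_sub_one, card_univ, Fintype.card_fin]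

section OrbitQuotient

variable (G : Type*) [Group G] {α : Type*}

def funOrbitQuotientEquiv [DecidableEq α] (a₀ : α) :
    MulAction.orbitRel.Quotient G (α → G) ≃ ({a // a ≠ a₀} → G) where
  toFun := Quotient.lift (fun f a => (f a₀)⁻¹ * f a) (by
    rintro f _ ⟨c, rfl⟩
    funext a
    simp [mul_assoc])
  invFun v := Quotient.mk _ fun a => if h : a = a₀ then 1 else v ⟨a, h⟩
  left_inv q := by
    induction q using Quotient.inductionOn' with
    | h f =>
      refine Quotient.sound ⟨(f a₀)⁻¹, funext fun a => ?_⟩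
      by_cases h : a = a₀ <;> simp [h]
  right_inv v := by
    funext a
    simp [a.2]

theorem card_funOrbitQuotient [Finite α] [Nonempty α] :
    Nat.card (MulAction.orbitRel.Quotient G (α → G)) = Nat.card G ^ (Nat.card α - 1) := by
  classical
  obtain ⟨a₀⟩ := ‹Nonempty α›
  have := Fintype.ofFinite α
  rw [Nat.card_congr (funOrbitQuotientEquiv G a₀), Nat.card_fun,
    Nat.card_eq_fintype_card (α := {a // a ≠ a₀}), Fintype.card_subtype_compl,
    Fintype.card_subtype_eq, Nat.card_eq_fintype_card (α := α)]

end OrbitQuotient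

def gLabeledPartitionEquiv {n : ℕ} {G : Type} [Group G] :
    GLabeledPartition (Fin n) G ≃
      (Λ : {Λ : Finset (Finset (Fin n)) // IsPartitionOn univ Λ}) ×
        ((B : Λ.1) → MulAction.orbitRel.Quotient G (B.1 → G)) where
  toFun P := ⟨⟨P.blocks, P.nonempty_blocks, fun B _ => subset_univ B,
      fun x _ => P.exists_unique_block x⟩, fun B => P.label B.1 B.2⟩
  invFun q := ⟨q.1.1, q.1.2.1, fun x => q.1.2.2.2 x (mem_univ x), fun B hB => q.2 ⟨B, hB⟩⟩

theorem card_blockLabelings {n : ℕ} {G : Type} [Group G] {Λ : Finset (Finset (Fin n))}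
    (hΛ : IsPartitionOn univ Λ) :
    Nat.card ((B : Λ) → MulAction.orbitRel.Quotient G (B.1 → G)) =
      Nat.card G ^ (n - Λ.card) := by
  have hB (B : Λ) : Nonempty B.1 := (hΛ.1 B.1 B.2).to_subtype
  rw [Nat.card_pi]
  simp_rw [card_funOrbitQuotient, Nat.card_eq_finsetCard]
  rw [prod_coe_sort Λ (fun B => Nat.card G ^ (B.card - 1)), prod_pow_eq_pow_sum,
    hΛ.sum_card_sub_one, card_univ, Fintype.card_fin]

theorem card_arcLabelings {n : ℕ} {G : Type} {Λ : Finset (Finset (Fin n))}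
    (hΛ : IsPartitionOn univ Λ) :
    Nat.card ({a : Fin n × Fin n // IsArc Λ a} → G) = Nat.card G ^ (n - Λ.card) := by
  rw [Nat.card_fun, card_arcs hΛ]

/-- The number of `G`-labeled set partitions of `[n]` equals the number of set
partitions of `[n]` whose arcs are labeled by elements of `G`; in particular a
partition with `k` blocks has `|G|^(n-k)` arc labelings. -/
theorem stmt12 (n : ℕ) (G : Type) [Group G] [Fintype G] :
    Nat.card (GLabeledPartition (Fin n) G)
      = Nat.card ((Λ : {Λ : Finset (Finset (Fin n)) // IsPartitionOn Finset.univ Λ}) ×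
          ({ a : Fin n × Fin n // IsArc Λ.1 a } → G)) ∧
    ∀ Λ : Finset (Finset (Fin n)), IsPartitionOn Finset.univ Λ →
      Nat.card ({ a : Fin n × Fin n // IsArc Λ a } → G)
        = Fintype.card G ^ (n - Λ.card) := by
  refine ⟨?_, fun Λ hΛ => by rw [card_arcLabelings hΛ, Nat.card_eq_fintype_card]⟩
  rw [Nat.card_congr gLabeledPartitionEquiv, Nat.card_sigma, Nat.card_sigma]
  exact sum_congr rfl fun Λ _ => (card_blockLabelings Λ.2).trans (card_arcLabelings Λ.2).symm
end
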